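/- arXiv:2404.19136 — 4 statements merged into one kernel-verified Lean document; each statement's English description precedes it below -/
import Mathlib

section
/- The sequence a(n) = (n!)^2 satisfies the rational recursion a(n+3) = a(n+2) * (2*a(n)*a(n+1) + 2*a(n)*a(n+2) - a(n+1)^2) / (a(n)*a(n+1)) for all natural numbers n; equivalently, a(n)*a(n+1)*a(n+3) = a(n+2)*(2*a(n)*a(n+1) + 2*a(n)*a(n+2) - a(n+1)^2). -/
def factSq (n : ℕ) : ℕ := (Nat.factorial n) ^ 2

theorem factSq_simple_ratrec (n : ℕ) :
    ((factSq (n + 3) : ℚ) =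
      (factSq (n + 2) : ℚ) *
        (2 * factSq n * factSq (n + 1) + 2 * factSq n * factSq (n + 2)
          - (factSq (n + 1) : ℚ) ^ 2) / ((factSq n : ℚ) * factSq (n + 1)))
    ∧ (factSq n : ℤ) * factSq (n + 1) * factSq (n + 3) =
        (factSq (n + 2) : ℤ) * (2 * factSq n * factSq (n + 1)
          + 2 * (factSq n : ℤ) * factSq (n + 2) - (factSq (n + 1) : ℤ) ^ 2) := by
  have hf : (0 : ℚ) < Nat.factorial n := by exact_mod_cast n.factorial_pos
  constructor
  · have h0 : (factSq n : ℚ) ≠ 0 := by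
      simp [factSq]; positivity
    have h1 : (factSq (n + 1) : ℚ) ≠ 0 := by
      have := (n+1).factorial_pos
      simp [factSq]; positivity
    rw [eq_div_iff (by exact mul_ne_zero h0 h1)]
    simp only [factSq, show n+3 = n+1+1+1 from rfl, show n+2 = n+1+1 from rfl,
      Nat.factorial_succ]
    push_cast
    ring
  · simp only [factSq, show n+3 = n+1+1+1 from rfl, show n+2 = n+1+1 from rfl,
      Nat.factorial_succ]
    push_cast
    ring
end

section
/- Every holonomic sequence over a field K of characteristic zero whose defining recurrence has order l and degree 1 is simple ratrec of order at most l+1: there exist polynomials Q, R in l+1 variables over K, with Q not identically zero as a polynomial, such that for all n with Q(a(n),…,a(n+l)) ≠ 0, one has a(n+l+1) = R(a(n),…,a(n+l)) / Q(a(n),…,a(n+l)); moreover the polynomial identity Q(a(n),…,a(n+l)) * a(n+l+1) = R(a(n),…,a(n+l)) holds for all n. -/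
/-!
Write the recurrence as `∑ i ≤ j, (c i + b i * n) * a (n + i) = 0` with `(c j, b j) ≠ 0`,
where `j` is the largest index with `P j ≠ 0`. With `Lb n = ∑ b i * a (n + i)` and
`Lc n = ∑ c i * a (n + i)`, the recurrence at `n` says `n * Lb n = - Lc n`. Multiplying the
recurrence at `n + 1` by `Lb n` therefore eliminates `n`: its coefficients become the linear forms
`c i * Lb n + b i * (Lb n - Lc n)` in the window `a n, …, a (n + j)`, and solving for the top term
`a (n + j + 1)` gives the rational recurrence. Its denominator is a nonzero linear form unless all
`b i` vanish, in which case the recurrence has constant coefficients and needs no multiplier.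
-/

open Finset MvPolynomial

def IsRatrecPair {K : Type*} [CommRing K] {m : ℕ} (a : ℕ → K) (Q R : MvPolynomial (Fin m) K) :
    Prop :=
  ∀ n : ℕ, eval (fun i : Fin m => a (n + i)) Q * a (n + m) = eval (fun i : Fin m => a (n + i)) R

section LinearForm

variable {K : Type*} [CommRing K] {N : ℕ}

noncomputable def linearForm (g : ℕ → K) : MvPolynomial (Fin N) K :=
  ∑ k : Fin N, C (g k) * X k

theorem eval_linearForm (g : ℕ → K) (x : Fin N → K) :
    eval x (linearForm g) = ∑ k : Fin N, g k * x k := by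
  simp [linearForm]

theorem eval_window_linearForm (g a : ℕ → K) (n : ℕ) :
    eval (fun i : Fin N => a (n + i)) (linearForm g) = ∑ i ∈ range N, g i * a (n + i) := by
  rw [eval_linearForm]
  exact Fin.sum_univ_eq_sum_range (fun i => g i * a (n + i)) N

theorem eval_single_linearForm (g : ℕ → K) (k : Fin N) :
    eval (Pi.single k 1) (linearForm g) = g k := by
  simp [eval_linearForm, Pi.single_apply]

end LinearForm

section AffineRecurrence

variable {K : Type*} [CommRing K] {j : ℕ} {a c b : ℕ → K}

theorem isRatrecPair_of_multipliers (U V : MvPolynomial (Fin (j + 1)) K)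
    (h : ∀ n : ℕ, ∑ i ∈ range (j + 1),
      (c i * eval (fun i : Fin (j + 1) => a (n + i)) U +
        b i * eval (fun i : Fin (j + 1) => a (n + i)) V) * a (n + 1 + i) = 0) :
    IsRatrecPair a (C (c j) * U + C (b j) * V)
      (-∑ i : Fin j, (C (c i) * U + C (b i) * V) * X i.succ) := by
  intro n
  have hn := h n
  rw [sum_range_succ] at hn
  simp only [map_add, map_mul, map_neg, map_sum, eval_C, eval_X, Fin.val_succ]
  rw [Fin.sum_univ_eq_sum_range (fun i => (c i * eval (fun i : Fin (j + 1) => a (n + i)) U +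
    b i * eval (fun i : Fin (j + 1) => a (n + i)) V) * a (n + (i + 1))) j]
  simp only [← add_assoc, add_right_comm n 1] at hn ⊢
  linear_combination hn

theorem sum_linearForm_multipliers_eq_zero
    (hrec : ∀ m : ℕ, ∑ i ∈ range (j + 1), (c i + b i * m) * a (m + i) = 0) (n : ℕ) :
    ∑ i ∈ range (j + 1),
      (c i * eval (fun i : Fin (j + 1) => a (n + i)) (linearForm b) +
        b i * eval (fun i : Fin (j + 1) => a (n + i)) (linearForm (b - c))) * a (n + 1 + i) =
      0 := by
  set Lb := ∑ i ∈ range (j + 1), b i * a (n + i)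
  have hLc : ∑ i ∈ range (j + 1), c i * a (n + i) = -(n * Lb) := by
    rw [eq_neg_iff_add_eq_zero, mul_sum, ← sum_add_distrib, ← hrec n]
    exact sum_congr rfl fun i _ => by ring
  have hV : eval (fun i : Fin (j + 1) => a (n + i)) (linearForm (b - c)) = (n + 1) * Lb := by
    simp only [eval_window_linearForm, Pi.sub_apply, sub_mul, sum_sub_distrib, hLc]
    ring
  have hU : eval (fun i : Fin (j + 1) => a (n + i)) (linearForm b) = Lb :=
    eval_window_linearForm b a n
  rw [hU, hV]
  clear_value Lb
  calc _ = Lb * ∑ i ∈ range (j + 1), (c i + b i * ((n + 1 : ℕ) : K)) * a (n + 1 + i) := by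
        rw [mul_sum]
        exact sum_congr rfl fun i _ => by push_cast; ring
    _ = 0 := by rw [hrec, mul_zero]

theorem exists_multipliers_of_affine_recurrence [NoZeroDivisors K] (hlead : c j ≠ 0 ∨ b j ≠ 0)
    (hrec : ∀ m : ℕ, ∑ i ∈ range (j + 1), (c i + b i * m) * a (m + i) = 0) :
    ∃ U V : MvPolynomial (Fin (j + 1)) K, C (c j) * U + C (b j) * V ≠ 0 ∧
      ∀ n : ℕ, ∑ i ∈ range (j + 1),
        (c i * eval (fun i : Fin (j + 1) => a (n + i)) U +
          b i * eval (fun i : Fin (j + 1) => a (n + i)) V) * a (n + 1 + i) = 0 := by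
  by_cases hb : ∃ k ≤ j, b k ≠ 0
  · refine ⟨linearForm b, linearForm (b - c), fun hQ => ?_,
      sum_linearForm_multipliers_eq_zero hrec⟩
    have hcoeff (k : Fin (j + 1)) : c j * b k + b j * (b k - c k) = 0 := by
      simpa [eval_single_linearForm] using congrArg (eval (Pi.single k 1)) hQ
    have hbj : b j = 0 := by
      have := hcoeff (Fin.last j)
      simp only [Fin.val_last] at this
      exact pow_eq_zero_iff two_ne_zero |>.1 (by linear_combination this)
    obtain ⟨k, hkj, hbk⟩ := hb
    have := hcoeff ⟨k, by omega⟩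
    simp only [hbj, zero_mul, add_zero] at this
    exact mul_ne_zero (hlead.resolve_right (not_not.2 hbj)) hbk this
  · push Not at hb
    refine ⟨1, 0, ?_, fun n => ?_⟩
    · simpa [hb j le_rfl] using hlead
    · rw [← hrec (n + 1)]
      refine sum_congr rfl fun i hi => ?_
      rw [hb i (by simpa [Nat.lt_succ_iff] using hi)]
      simp

theorem exists_isRatrecPair_of_affine_recurrence [NoZeroDivisors K]
    (hlead : c j ≠ 0 ∨ b j ≠ 0)
    (hrec : ∀ m : ℕ, ∑ i ∈ range (j + 1), (c i + b i * m) * a (m + i) = 0) :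
    ∃ Q R : MvPolynomial (Fin (j + 1)) K, Q ≠ 0 ∧ IsRatrecPair a Q R := by
  obtain ⟨U, V, hQ, hUV⟩ := exists_multipliers_of_affine_recurrence hlead hrec
  exact ⟨_, _, hQ, isRatrecPair_of_multipliers U V hUV⟩

end AffineRecurrence

theorem IsRatrecPair.rename_shift {K : Type*} [CommRing K] {a : ℕ → K} {N M s : ℕ}
    {Q R : MvPolynomial (Fin N) K} (h : IsRatrecPair a Q R) (f : Fin N → Fin M)
    (hf : ∀ k, (f k : ℕ) = s + k) (n : ℕ) :
    eval (fun i : Fin M => a (n + i)) (rename f Q) * a (n + s + N) =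
      eval (fun i : Fin M => a (n + i)) (rename f R) := by
  simp only [eval_rename, Function.comp_def, hf, ← add_assoc]
  exact h (n + s)

theorem exists_affine_recurrence_of_natDegree_le_one {K : Type*} [CommRing K] {l : ℕ}
    {a : ℕ → K} {P : ℕ → Polynomial K}
    (hdeg : ∀ i ≤ l, (P i).natDegree ≤ 1) (hne : ∃ i ≤ l, P i ≠ 0)
    (hrec : ∀ n : ℕ, ∑ i ∈ range (l + 1), (P i).eval (n : K) * a (n + i) = 0) :
    ∃ j ≤ l, ((P j).coeff 0 ≠ 0 ∨ (P j).coeff 1 ≠ 0) ∧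
      ∀ m : ℕ,
        ∑ i ∈ range (j + 1), ((P i).coeff 0 + (P i).coeff 1 * m) * a (m + i) = 0 := by
  classical
  obtain ⟨i₀, hi₀l, hi₀⟩ := hne
  set j := Nat.findGreatest (fun i => P i ≠ 0) l
  have hjl : j ≤ l := Nat.findGreatest_le l
  have hPj : P j ≠ 0 := Nat.findGreatest_spec (P := fun i => P i ≠ 0) hi₀l hi₀
  have hPgt (i : ℕ) (hji : j < i) (hil : i ≤ l) : P i = 0 :=
    not_not.1 (Nat.findGreatest_is_greatest hji hil)
  have hlin (i : ℕ) (hil : i ≤ l) : P i = Polynomial.C ((P i).coeff 1) * Polynomial.X +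
      Polynomial.C ((P i).coeff 0) :=
    Polynomial.eq_X_add_C_of_natDegree_le_one (hdeg i hil)
  refine ⟨j, hjl, ?_, fun m => ?_⟩
  · by_contra! h
    exact hPj (by rw [hlin j hjl, h.1, h.2]; simp)
  · rw [← hrec m]
    refine sum_subset_zero_on_sdiff (range_subset_range.2 (by omega)) (fun i hi => ?_)
      (fun i hi => ?_)
    · simp only [mem_sdiff, mem_range] at hi
      simp [hPgt i (by omega) (by omega)]
    · rw [hlin i (by simp at hi; omega)]
      simp [add_comm]

theorem degree_one_holonomic_is_simple_ratrec_general
    (K : Type*) [Field K] (l : ℕ) (a : ℕ → K)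
    (P : ℕ → Polynomial K)
    (hdeg : ∀ i ≤ l, (P i).natDegree ≤ 1)
    (hne : ∃ i ≤ l, P i ≠ 0)
    (hrec : ∀ n : ℕ,
      ∑ i ∈ range (l + 1), (P i).eval (n : K) * a (n + i) = 0) :
    ∃ Q R : MvPolynomial (Fin (l + 1)) K, Q ≠ 0 ∧
      ∀ n : ℕ,
        (MvPolynomial.eval (fun i : Fin (l + 1) => a (n + i)) Q ≠ 0 →
          a (n + l + 1) =
            MvPolynomial.eval (fun i : Fin (l + 1) => a (n + i)) R /
              MvPolynomial.eval (fun i : Fin (l + 1) => a (n + i)) Q) ∧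
        MvPolynomial.eval (fun i : Fin (l + 1) => a (n + i)) Q * a (n + l + 1) =
          MvPolynomial.eval (fun i : Fin (l + 1) => a (n + i)) R := by
  obtain ⟨j, hjl, hlead, hrec'⟩ := exists_affine_recurrence_of_natDegree_le_one hdeg hne hrec
  obtain ⟨Q, R, hQ, hQR⟩ := exists_isRatrecPair_of_affine_recurrence hlead hrec'
  let f : Fin (j + 1) → Fin (l + 1) := fun k => ⟨l - j + k, by omega⟩
  have hf : Function.Injective f := fun k k' h => Fin.ext (by simpa [f] using h)
  refine ⟨rename f Q, rename f R, (map_ne_zero_iff _ (rename_injective f hf)).2 hQ, fun n => ?_⟩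
  have h := hQR.rename_shift f (fun _ => rfl) n
  rw [show n + (l - j) + (j + 1) = n + l + 1 by omega] at h
  exact ⟨fun hQn => (eq_div_iff hQn).2 (by rw [mul_comm, h]), h⟩

theorem degree_one_holonomic_is_simple_ratrec
    (K : Type*) [Field K] [CharZero K] (l : ℕ) (a : ℕ → K)
    (P : ℕ → Polynomial K)
    (hdeg : ∀ i ≤ l, (P i).natDegree ≤ 1)
    (hne : ∃ i ≤ l, P i ≠ 0)
    (hrec : ∀ n : ℕ,
      ∑ i ∈ range (l + 1), (P i).eval (n : K) * a (n + i) = 0) :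
    ∃ Q R : MvPolynomial (Fin (l + 1)) K, Q ≠ 0 ∧
      ∀ n : ℕ,
        (MvPolynomial.eval (fun i : Fin (l + 1) => a (n + i)) Q ≠ 0 →
          a (n + l + 1) =
            MvPolynomial.eval (fun i : Fin (l + 1) => a (n + i)) R /
              MvPolynomial.eval (fun i : Fin (l + 1) => a (n + i)) Q) ∧
        MvPolynomial.eval (fun i : Fin (l + 1) => a (n + i)) Q * a (n + l + 1) =
          MvPolynomial.eval (fun i : Fin (l + 1) => a (n + i)) R :=
  degree_one_holonomic_is_simple_ratrec_general K l a P hdeg hne hrec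
end

section
/- Every holonomic sequence over a field K of characteristic zero of order l and degree d satisfies a difference-polynomial identity of order at most l+d that is linear in its highest shift: there exist multivariate polynomials Q, R over K in the variables x_0,…,x_{l+d-1}, with Q not the zero polynomial, such that for all n, Q(a(n),…,a(n+l+d-1)) * a(n+l+d) = R(a(n),…,a(n+l+d-1)). -/
open Finset Polynomial

lemma hasseDeriv_map' {R S : Type*} [Semiring R] [Semiring S] (f : R →+* S) (k : ℕ)
    (p : Polynomial R) :
    Polynomial.hasseDeriv k (p.map f) = (Polynomial.hasseDeriv k p).map f := by
  ext n
  simp [Polynomial.hasseDeriv_coeff, Polynomial.coeff_map]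

lemma det_hasse_ne_zero {F : Type*} [Field F] [CharZero F] (d : ℕ) (G : Polynomial F)
    (hdeg : G.natDegree ≤ d) (hlc : G.coeff d ≠ 0) :
    (Matrix.of fun k t : Fin (d+1) =>
      (Polynomial.hasseDeriv (t:ℕ) G).eval ((k:ℕ) : F)).det ≠ 0 := by
  classical
  set B : Matrix (Fin (d+1)) (Fin (d+1)) F :=
    Matrix.of (fun t s : Fin (d+1) => (Polynomial.hasseDeriv (t:ℕ) G).coeff (s:ℕ)) with hB
  have hfact : (Matrix.of fun k t : Fin (d+1) =>
      (Polynomial.hasseDeriv (t:ℕ) G).eval ((k:ℕ) : F))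
      = (Matrix.vandermonde fun k : Fin (d+1) => ((k:ℕ) : F)) * B.transpose := by
    ext k t
    rw [Matrix.mul_apply]
    simp only [Matrix.of_apply]
    rw [Polynomial.eval_eq_sum_range' (n := d+1)
      (lt_of_le_of_lt (le_trans (Polynomial.natDegree_hasseDeriv_le _ _)
        (le_trans (Nat.sub_le _ _) hdeg)) (Nat.lt_succ_self d))]
    rw [← Fin.sum_univ_eq_sum_range]
    refine Finset.sum_congr rfl fun s _ => ?_
    simp [Matrix.vandermonde, hB, mul_comm]
  rw [hfact, Matrix.det_mul]
  apply mul_ne_zero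
  · rw [Matrix.det_vandermonde_ne_zero_iff]
    intro i j hij
    exact Fin.ext (Nat.cast_injective hij)
  · rw [Matrix.det_transpose]
    have htri : (B.submatrix id (Fin.revPerm : Equiv.Perm (Fin (d+1)))).BlockTriangular id := by
      intro i j hij
      have hj : (j:ℕ) < (i:ℕ) := hij
      have hi : (i:ℕ) ≤ d := Nat.lt_succ_iff.mp i.isLt
      simp only [Matrix.submatrix_apply, id, hB, Matrix.of_apply, Fin.revPerm_apply]
      rw [show ((Fin.rev j : Fin (d+1)) : ℕ) = d - (j:ℕ) by simp [Fin.val_rev]]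
      apply Polynomial.coeff_eq_zero_of_natDegree_lt
      refine lt_of_le_of_lt (le_trans (Polynomial.natDegree_hasseDeriv_le _ _)
        (Nat.sub_le_sub_right hdeg _)) ?_
      omega
    have h2 : (B.submatrix id (Fin.revPerm : Equiv.Perm (Fin (d+1)))).det ≠ 0 := by
      rw [Matrix.det_of_upperTriangular htri]
      apply Finset.prod_ne_zero_iff.mpr
      intro i _
      have hi : (i:ℕ) ≤ d := Nat.lt_succ_iff.mp i.isLt
      simp only [Matrix.submatrix_apply, id, hB, Matrix.of_apply, Fin.revPerm_apply]
      rw [show ((Fin.rev i : Fin (d+1)) : ℕ) = d - (i:ℕ) by simp [Fin.val_rev]]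
      rw [Polynomial.hasseDeriv_coeff]
      rw [show d - (i:ℕ) + (i:ℕ) = d by omega]
      exact mul_ne_zero (Nat.cast_ne_zero.mpr (Nat.choose_pos hi).ne') hlc
    have h1 := Matrix.det_permute' (Fin.revPerm : Equiv.Perm (Fin (d+1))) B
    intro h0
    rw [h0, mul_zero] at h1
    exact h2 h1

lemma main_exact (K : Type*) [Field K] [CharZero K] (l d : ℕ) (a : ℕ → K)
    (P : ℕ → Polynomial K)
    (hdeg : ∀ i ≤ l, (P i).natDegree ≤ d)
    (hlead : ∃ i₀, i₀ ≤ l ∧ (P i₀).coeff d ≠ 0)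
    (hrec : ∀ n : ℕ,
      ∑ i ∈ range (l + 1), (P i).eval (n : K) * a (n + i) = 0) :
    ∃ Q R : MvPolynomial (Fin (l + d)) K, Q ≠ 0 ∧
      ∀ n : ℕ,
        MvPolynomial.eval (fun i : Fin (l + d) => a (n + i)) Q * a (n + (l + d)) =
          MvPolynomial.eval (fun i : Fin (l + d) => a (n + i)) R := by
  classical
  set N := l + d with hN
  set xv : ℕ → Polynomial (MvPolynomial (Fin N) K) := fun j =>
    if h : j < N then Polynomial.C (MvPolynomial.X ⟨j, h⟩) else Polynomial.X with hxv
  set M : Matrix (Fin (d+1)) (Fin (d+1)) (Polynomial (MvPolynomial (Fin N) K)) :=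
    Matrix.of (fun k t : Fin (d+1) =>
      ∑ i ∈ range (l+1),
        Polynomial.C (MvPolynomial.C ((Polynomial.taylor ((k:ℕ):K) (P i)).coeff (t:ℕ))) *
          xv ((k:ℕ) + i)) with hM
  set D := M.det with hD
  -- degree bound
  have hMdeg : ∀ k t : Fin (d+1), (M k t).natDegree ≤ if (k:ℕ) = d then 1 else 0 := by
    intro k t
    show ((∑ i ∈ range (l+1),
        Polynomial.C (MvPolynomial.C ((Polynomial.taylor ((k:ℕ):K) (P i)).coeff (t:ℕ))) *
          xv ((k:ℕ) + i))).natDegree ≤ _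
    refine Polynomial.natDegree_sum_le_of_forall_le _ _ fun i hi => ?_
    have hil : i ≤ l := Nat.lt_succ_iff.mp (mem_range.mp hi)
    have hkd : (k:ℕ) ≤ d := Nat.lt_succ_iff.mp k.isLt
    refine le_trans (Polynomial.natDegree_mul_le) ?_
    rw [Polynomial.natDegree_C]
    by_cases h : (k:ℕ) + i < N
    · simp [hxv, h]
    · have hk : (k:ℕ) = d := by omega
      rw [hxv]
      simp only []
      rw [dif_neg h, if_pos hk]
      simpa using Polynomial.natDegree_X_le
  have hDdeg : D.natDegree ≤ 1 := by
    rw [hD, Matrix.det_apply]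
    refine Polynomial.natDegree_sum_le_of_forall_le _ _ fun σ _ => ?_
    rw [Units.smul_def, zsmul_eq_mul]
    refine le_trans Polynomial.natDegree_mul_le ?_
    rw [Polynomial.natDegree_intCast, zero_add]
    refine le_trans (Polynomial.natDegree_prod_le _ _) ?_
    have : ∀ i : Fin (d+1), (M (σ i) i).natDegree ≤ if ((σ i : Fin (d+1)):ℕ) = d then 1 else 0 :=
      fun i => hMdeg _ _
    refine le_trans (Finset.sum_le_sum fun i _ => this i) ?_
    rw [show ∑ i : Fin (d+1), (if ((σ i : Fin (d+1)):ℕ) = d then 1 else 0)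
        = ∑ i : Fin (d+1), (if ((i : Fin (d+1)):ℕ) = d then 1 else 0) from
      Equiv.sum_comp σ (fun k : Fin (d+1) => if (k:ℕ) = d then (1:ℕ) else 0)]
    have : ∀ i : Fin (d+1), (if ((i : Fin (d+1)):ℕ) = d then 1 else 0)
        = if i = Fin.last d then 1 else 0 := by
      intro i
      congr 1
      simp [Fin.ext_iff, Fin.val_last]
    simp only [this]
    rw [Finset.sum_ite_eq' univ (Fin.last d) (fun _ => 1)]
    simp
  have hNlast : ∀ (k : Fin (d+1)) (i : ℕ), i ≤ l → (k:ℕ) + i ≤ N := by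
    intro k i hi
    have := Nat.lt_succ_iff.mp k.isLt
    omega
  -- evaluation at window n gives zero
  have hφD : ∀ n : ℕ,
      Polynomial.eval₂ (MvPolynomial.eval (fun j : Fin N => a (n + (j:ℕ)))) (a (n + N)) D = 0 := by
    intro n
    set φ : Polynomial (MvPolynomial (Fin N) K) →+* K :=
      Polynomial.eval₂RingHom (MvPolynomial.eval (fun j : Fin N => a (n + (j:ℕ)))) (a (n + N)) with hφ
    have hφxv : ∀ j : ℕ, j ≤ N → φ (xv j) = a (n + j) := by
      intro j hj
      rw [hxv]
      by_cases h : j < N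
      · simp only [dif_pos h, hφ, Polynomial.coe_eval₂RingHom, Polynomial.eval₂_C]
        simp
      · have hjN : j = N := by omega
        subst hjN
        simp only [dif_neg h, hφ, Polynomial.coe_eval₂RingHom, Polynomial.eval₂_X]
    have hmap : ∀ (k t : Fin (d+1)), (M.map φ) k t
        = ∑ i ∈ range (l+1),
            (Polynomial.taylor ((k:ℕ):K) (P i)).coeff (t:ℕ) * a (n + ((k:ℕ) + i)) := by
      intro k t
      simp only [Matrix.map_apply, hM, Matrix.of_apply, map_sum, map_mul]
      refine Finset.sum_congr rfl fun i hi => ?_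
      rw [hφxv _ (hNlast k i (Nat.lt_succ_iff.mp (mem_range.mp hi)))]
      congr 1
      simp [hφ]
    have hmv : (M.map φ).mulVec (fun t : Fin (d+1) => (n:K) ^ (t:ℕ)) = 0 := by
      funext k
      simp only [Matrix.mulVec, dotProduct, hmap, Pi.zero_apply]
      have hswap : ∑ t : Fin (d+1), (∑ i ∈ range (l+1),
            (Polynomial.taylor ((k:ℕ):K) (P i)).coeff (t:ℕ) * a (n + ((k:ℕ) + i))) * (n:K)^(t:ℕ)
          = ∑ i ∈ range (l+1), (∑ t : Fin (d+1),
            (Polynomial.taylor ((k:ℕ):K) (P i)).coeff (t:ℕ) * (n:K)^(t:ℕ)) * a (n + ((k:ℕ) + i)) := by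
        simp only [Finset.sum_mul]
        rw [Finset.sum_comm]
        refine Finset.sum_congr rfl fun i _ => Finset.sum_congr rfl fun t _ => by ring
      rw [hswap]
      have hkey : ∀ i ∈ range (l+1), (∑ t : Fin (d+1),
            (Polynomial.taylor ((k:ℕ):K) (P i)).coeff (t:ℕ) * (n:K)^(t:ℕ)) * a (n + ((k:ℕ) + i))
          = (P i).eval (((n + (k:ℕ)):ℕ):K) * a (n + ((k:ℕ) + i)) := by
        intro i hi
        congr 1
        have hdeg' : (Polynomial.taylor ((k:ℕ):K) (P i)).natDegree < d + 1 := by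
          rw [Polynomial.natDegree_taylor]
          exact Nat.lt_succ_of_le (hdeg i (Nat.lt_succ_iff.mp (mem_range.mp hi)))
        rw [Fin.sum_univ_eq_sum_range
          (fun t => (Polynomial.taylor ((k:ℕ):K) (P i)).coeff t * (n:K)^t)]
        rw [← Polynomial.eval_eq_sum_range' hdeg' ((n:K))]
        rw [Polynomial.taylor_eval]
        push_cast
        ring_nf
      rw [Finset.sum_congr rfl hkey]
      have hr := hrec (n + (k:ℕ))
      simp only [← add_assoc] at hr ⊢
      exact hr
    have hdet0 : (M.map φ).det = 0 := by
      rw [← Matrix.exists_mulVec_eq_zero_iff]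
      refine ⟨_, ?_, hmv⟩
      intro hv
      have := congrFun hv 0
      simp at this
    show φ D = 0
    rw [hD, RingHom.map_det, RingHom.mapMatrix_apply, hdet0]
  -- nonvanishing of D
  have hDne : D ≠ 0 := by
    set F := FractionRing (Polynomial K) with hF
    haveI : CharZero F := charZero_of_injective_algebraMap (IsFractionRing.injective (Polynomial K) F)
    set algK : K →+* F := (algebraMap (Polynomial K) F).comp Polynomial.C with halgK
    set z : F := algebraMap (Polynomial K) F Polynomial.X with hz
    have hzne : z ≠ 0 := by
      rw [hz]
      intro h
      exact Polynomial.X_ne_zero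
        (IsFractionRing.injective (Polynomial K) F (by simpa using h))
    set ψ : Polynomial (MvPolynomial (Fin N) K) →+* F :=
      Polynomial.eval₂RingHom (MvPolynomial.eval₂Hom algK (fun j : Fin N => z ^ (j:ℕ))) (z ^ N)
      with hψ
    intro hD0
    have hψD : ψ D = 0 := by rw [hD0]; exact map_zero ψ
    set G : Polynomial F := ∑ i ∈ range (l+1), Polynomial.C (z^i) * ((P i).map algK) with hG
    have hGdeg : G.natDegree ≤ d := by
      rw [hG]
      refine Polynomial.natDegree_sum_le_of_forall_le _ _ fun i hi => ?_
      refine le_trans Polynomial.natDegree_mul_le ?_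
      rw [Polynomial.natDegree_C, zero_add]
      exact le_trans Polynomial.natDegree_map_le (hdeg i (Nat.lt_succ_iff.mp (mem_range.mp hi)))
    have hGlc : G.coeff d ≠ 0 := by
      obtain ⟨i₀, hi₀l, hi₀⟩ := hlead
      have hcoeff : G.coeff d = algebraMap (Polynomial K) F
          (∑ i ∈ range (l+1), Polynomial.C ((P i).coeff d) * Polynomial.X ^ i) := by
        rw [hG, Polynomial.finset_sum_coeff, map_sum]
        refine Finset.sum_congr rfl fun i _ => ?_
        rw [Polynomial.coeff_C_mul, Polynomial.coeff_map, map_mul, map_pow]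
        rw [halgK, RingHom.comp_apply, hz]
        ring
      rw [hcoeff]
      intro h0
      have hpol : (∑ i ∈ range (l+1), Polynomial.C ((P i).coeff d) * Polynomial.X ^ i) = 0 :=
        IsFractionRing.injective (Polynomial K) F (by simpa using h0)
      have hc := congrArg (fun p => Polynomial.coeff p i₀) hpol
      simp only [Polynomial.finset_sum_coeff, Polynomial.coeff_C_mul, Polynomial.coeff_X_pow,
        Polynomial.coeff_zero] at hc
      rw [Finset.sum_eq_single i₀] at hc
      · simp at hc
        exact hi₀ hc
      · intro b _ hb
        simp [Ne.symm hb]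
      · intro h
        exact absurd (mem_range.mpr (Nat.lt_succ_of_le hi₀l)) h
    have hψxv : ∀ j : ℕ, j ≤ N → ψ (xv j) = z ^ j := by
      intro j hj
      rw [hxv]
      by_cases h : j < N
      · simp only [dif_pos h, hψ, Polynomial.coe_eval₂RingHom, Polynomial.eval₂_C]
        simp
      · have hjN : j = N := by omega
        subst hjN
        simp only [dif_neg h, hψ, Polynomial.coe_eval₂RingHom, Polynomial.eval₂_X]
    have hmapψ : M.map ψ = Matrix.of (fun k t : Fin (d+1) =>
        z^(k:ℕ) * ((Polynomial.hasseDeriv (t:ℕ) G).eval (((k:ℕ) : F)))) := by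
      ext k t
      simp only [Matrix.map_apply, hM, Matrix.of_apply, map_sum, map_mul]
      have h1 : ∀ i ∈ range (l+1),
          ψ (Polynomial.C (MvPolynomial.C ((Polynomial.taylor ((k:ℕ):K) (P i)).coeff (t:ℕ))))
            * ψ (xv ((k:ℕ)+i))
          = z^(k:ℕ) * (algK ((Polynomial.taylor ((k:ℕ):K) (P i)).coeff (t:ℕ)) * z^i) := by
        intro i hi
        rw [hψxv _ (hNlast k i (Nat.lt_succ_iff.mp (mem_range.mp hi))), pow_add]
        rw [hψ]
        simp only [Polynomial.coe_eval₂RingHom, Polynomial.eval₂_C, MvPolynomial.eval₂Hom_C]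
        ring
      rw [Finset.sum_congr rfl h1, ← Finset.mul_sum]
      congr 1
      rw [hG, map_sum (Polynomial.hasseDeriv (t:ℕ)), Polynomial.eval_finset_sum]
      refine Finset.sum_congr rfl fun i _ => ?_
      rw [← Polynomial.smul_eq_C_mul, LinearMap.map_smul]
      rw [hasseDeriv_map', Polynomial.eval_smul, smul_eq_mul]
      rw [Polynomial.eval_map, Polynomial.eval₂_at_natCast, Polynomial.taylor_coeff]
      ring
    have hψdet : ψ D = (∏ k : Fin (d+1), z^(k:ℕ)) *
        (Matrix.of (fun k t : Fin (d+1) =>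
          (Polynomial.hasseDeriv (t:ℕ) G).eval (((k:ℕ) : F)))).det := by
      rw [hD, RingHom.map_det, RingHom.mapMatrix_apply, hmapψ]
      exact Matrix.det_mul_column _ _
    rw [hψD] at hψdet
    have hprod : (∏ k : Fin (d+1), z^(k:ℕ)) ≠ 0 :=
      Finset.prod_ne_zero_iff.mpr fun k _ => pow_ne_zero _ hzne
    exact (mul_ne_zero hprod (det_hasse_ne_zero d G hGdeg hGlc)) hψdet.symm
  -- assemble the answer
  set Q1 := D.coeff 1 with hQ1
  set S0 := D.coeff 0 with hS0
  have hsplit : D = Polynomial.C Q1 * Polynomial.X + Polynomial.C S0 :=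
    Polynomial.eq_X_add_C_of_degree_le_one (Polynomial.natDegree_le_iff_degree_le.mp hDdeg)
  have hrel : ∀ n : ℕ,
      MvPolynomial.eval (fun j : Fin N => a (n + (j:ℕ))) Q1 * a (n + N)
        + MvPolynomial.eval (fun j : Fin N => a (n + (j:ℕ))) S0 = 0 := by
    intro n
    have h := hφD n
    rw [hsplit] at h
    simpa [Polynomial.eval₂_add, Polynomial.eval₂_mul, Polynomial.eval₂_C,
      Polynomial.eval₂_X] using h
  by_cases hQ : Q1 = 0
  · have hS0ne : S0 ≠ 0 := by
      intro hS
      apply hDne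
      rw [hsplit, hQ, hS]
      simp
    refine ⟨S0, 0, hS0ne, fun n => ?_⟩
    have h := hrel n
    rw [hQ] at h
    simp only [map_zero, zero_mul, zero_add] at h
    rw [h, map_zero, zero_mul]
  · refine ⟨Q1, -S0, hQ, fun n => ?_⟩
    have h := hrel n
    rw [map_neg]
    linear_combination h

theorem holonomic_is_simple_ratrec
    (K : Type*) [Field K] [CharZero K] (l d : ℕ) (a : ℕ → K)
    (P : ℕ → Polynomial K)
    (hdeg : ∀ i ≤ l, (P i).natDegree ≤ d)
    (hne : ∃ i ≤ l, P i ≠ 0)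
    (hrec : ∀ n : ℕ,
      ∑ i ∈ range (l + 1), (P i).eval (n : K) * a (n + i) = 0) :
    ∃ Q R : MvPolynomial (Fin (l + d)) K, Q ≠ 0 ∧
      ∀ n : ℕ,
        MvPolynomial.eval (fun i : Fin (l + d) => a (n + i)) Q * a (n + l + d) =
          MvPolynomial.eval (fun i : Fin (l + d) => a (n + i)) R := by
  classical
  obtain ⟨i₀, hi₀l, hi₀ne⟩ := hne
  set s : Finset ℕ := (range (l+1)).filter (fun i => P i ≠ 0) with hs
  have hi₀s : i₀ ∈ s := by
    rw [hs, mem_filter, mem_range]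
    exact ⟨Nat.lt_succ_of_le hi₀l, hi₀ne⟩
  set d' := s.sup (fun i => (P i).natDegree) with hd'
  have hd'd : d' ≤ d := Finset.sup_le fun i hi => by
    rw [hs, mem_filter, mem_range] at hi
    exact hdeg i (Nat.lt_succ_iff.mp hi.1)
  obtain ⟨j₀, hj₀s, hj₀⟩ := Finset.exists_mem_eq_sup s ⟨i₀, hi₀s⟩ (fun i => (P i).natDegree)
  have hj₀l : j₀ ≤ l := by
    rw [hs, mem_filter, mem_range] at hj₀s
    exact Nat.lt_succ_iff.mp hj₀s.1
  have hj₀ne : P j₀ ≠ 0 := by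
    rw [hs, mem_filter] at hj₀s
    exact hj₀s.2
  have key := main_exact K l d a (fun i => Polynomial.X ^ (d - d') * P i) ?_ ?_ ?_
  · obtain ⟨Q, R, hQ, hrel⟩ := key
    refine ⟨Q, R, hQ, fun n => ?_⟩
    simpa only [add_assoc] using hrel n
  · intro i hi
    by_cases h : P i = 0
    · simp [h]
    · have his : i ∈ s := by
        rw [hs, mem_filter, mem_range]
        exact ⟨Nat.lt_succ_of_le hi, h⟩
      have hle : (P i).natDegree ≤ d' := by
        rw [hd']
        exact Finset.le_sup (f := fun i => (P i).natDegree) his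
      rw [Polynomial.natDegree_mul (pow_ne_zero _ Polynomial.X_ne_zero) h,
        Polynomial.natDegree_X_pow]
      omega
  · refine ⟨j₀, hj₀l, ?_⟩
    have hdd : (P j₀).natDegree + (d - d') = d := by omega
    have hco : (Polynomial.X ^ (d - d') * P j₀).coeff ((P j₀).natDegree + (d - d')) ≠ 0 := by
      rw [Polynomial.coeff_X_pow_mul, Polynomial.coeff_natDegree]
      exact Polynomial.leadingCoeff_ne_zero.mpr hj₀ne
    simpa only [hdd] using hco
  · intro n
    have h0 := hrec n
    have : ∑ i ∈ range (l + 1), (Polynomial.X ^ (d - d') * P i).eval (n:K) * a (n + i)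
        = (n:K)^(d-d') * ∑ i ∈ range (l + 1), (P i).eval (n:K) * a (n + i) := by
      rw [Finset.mul_sum]
      refine Finset.sum_congr rfl fun i _ => ?_
      rw [Polynomial.eval_mul, Polynomial.eval_pow, Polynomial.eval_X]
      ring
    rw [this, h0, mul_zero]
end

section
/- The sequence b(n) = binomial(2n, n)*binomial(3n, n) satisfies, for all n, the polynomial identity b(n+3) * (5508*b(n)*b(n+1) - 201*b(n)*b(n+2) - 84*b(n+1)^2 + 4*b(n+1)*b(n+2)) = 3*b(n+2) * (26244*b(n)*b(n+1) - 702*b(n)*b(n+2) - 378*b(n+1)^2 + 13*b(n+1)*b(n+2)). -/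
def binomProdZ (n : ℕ) : ℤ := (Nat.choose (2 * n) n : ℤ) * Nat.choose (3 * n) n

lemma binomProd_fact (n : ℕ) :
    (2 * n).choose n * (3 * n).choose n * (n.factorial) ^ 3 = (3 * n).factorial := by
  have h2 : (2 * n).choose n * n.factorial * n.factorial = (2 * n).factorial := by
    have := Nat.choose_mul_factorial_mul_factorial (show n ≤ 2 * n by omega)
    simpa [show 2 * n - n = n by omega] using this
  have h3 : (3 * n).choose n * n.factorial * (2 * n).factorial = (3 * n).factorial := by
    have := Nat.choose_mul_factorial_mul_factorial (show n ≤ 3 * n by omega)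
    simpa [show 3 * n - n = 2 * n by omega] using this
  calc (2 * n).choose n * (3 * n).choose n * (n.factorial) ^ 3
      = (3 * n).choose n * n.factorial * ((2 * n).choose n * n.factorial * n.factorial) := by ring
    _ = (3 * n).choose n * n.factorial * (2 * n).factorial := by rw [h2]
    _ = (3 * n).factorial := h3

lemma binomProdZ_rec (m : ℕ) :
    (binomProdZ (m + 1) : ℚ) * ((m : ℚ) + 1) ^ 2
      = 3 * (3 * (m : ℚ) + 1) * (3 * (m : ℚ) + 2) * binomProdZ m := by
  have key : ∀ k : ℕ, (binomProdZ k : ℚ) * (k.factorial : ℚ) ^ 3 = ((3 * k).factorial : ℚ) := by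
    intro k
    have := binomProd_fact k
    unfold binomProdZ
    push_cast [← this]
    ring
  have h1 := key m
  have h2 := key (m + 1)
  have hfm : ((m.factorial : ℚ)) ≠ 0 := by exact_mod_cast Nat.factorial_ne_zero m
  have hm1 : ((m : ℚ) + 1) ≠ 0 := by positivity
  have e2 : ((3 * (m + 1)).factorial : ℚ)
      = (3 * (m : ℚ) + 3) * (3 * (m : ℚ) + 2) * (3 * (m : ℚ) + 1) * ((3 * m).factorial : ℚ) := by
    have : 3 * (m + 1) = (3 * m + 1) + 1 + 1 := by omega
    rw [this, Nat.factorial_succ, Nat.factorial_succ, Nat.factorial_succ]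
    push_cast
    ring
  have e3 : (((m + 1).factorial : ℚ)) = ((m : ℚ) + 1) * (m.factorial : ℚ) := by
    rw [Nat.factorial_succ]; push_cast; ring
  rw [e2, e3, ← h1] at h2
  have hne : ((m : ℚ) + 1) * (m.factorial : ℚ) ^ 3 ≠ 0 :=
    mul_ne_zero hm1 (pow_ne_zero 3 hfm)
  apply mul_left_cancel₀ hne
  linear_combination h2

theorem binomProdZ_simple_ratrec (n : ℕ) :
    binomProdZ (n + 3) *
        (5508 * binomProdZ n * binomProdZ (n + 1) - 201 * binomProdZ n * binomProdZ (n + 2)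
          - 84 * binomProdZ (n + 1) ^ 2 + 4 * binomProdZ (n + 1) * binomProdZ (n + 2)) =
      3 * binomProdZ (n + 2) *
        (26244 * binomProdZ n * binomProdZ (n + 1) - 702 * binomProdZ n * binomProdZ (n + 2)
          - 378 * binomProdZ (n + 1) ^ 2 + 13 * binomProdZ (n + 1) * binomProdZ (n + 2)) := by
  have cast_inj : ∀ a b : ℤ, (a : ℚ) = (b : ℚ) → a = b := fun a b h => by exact_mod_cast h
  apply cast_inj
  push_cast
  set x : ℚ := (n : ℚ) with hx
  have h1 := binomProdZ_rec n
  have h2 := binomProdZ_rec (n + 1)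
  have h3 := binomProdZ_rec (n + 2)
  push_cast at h1 h2 h3
  set B0 : ℚ := (binomProdZ n : ℚ)
  set B1 : ℚ := (binomProdZ (n + 1) : ℚ)
  set B2 : ℚ := (binomProdZ (n + 2) : ℚ)
  set B3 : ℚ := (binomProdZ (n + 3) : ℚ)
  have hx1 : x + 1 ≠ 0 := by positivity
  have hx2 : x + 2 ≠ 0 := by positivity
  have hx3 : x + 3 ≠ 0 := by positivity
  have e1 : B1 = 3 * (3 * x + 1) * (3 * x + 2) * B0 / (x + 1) ^ 2 := by
    field_simp
    linarith [h1]
  have e2 : B2 = 3 * (3 * x + 4) * (3 * x + 5) * B1 / (x + 2) ^ 2 := by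
    field_simp
    nlinarith [h2]
  have e3 : B3 = 3 * (3 * x + 7) * (3 * x + 8) * B2 / (x + 3) ^ 2 := by
    field_simp
    nlinarith [h3]
  rw [e3, e2, e1]
  field_simp
  ring
end
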